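/- Fix s ∈ ℕ. Suppose ψ ∈ ℝ satisfies Ψ^s(t) ≤ ψ for all times t ≥ 0. Then for all natural numbers s′ ≥ s and all times t ≥ ψ/(μ−ρ), Ψ^{s′}(t) ≤ (ρ/μ)^{s′−s}·ψ. -/

import Mathlib

open Finset

variable {V : Type*}

/-- Node `v` satisfies the *fast condition* at time `t`. -/
def fastCond (G : SimpleGraph V) (L : V → ℝ → ℝ) (κ : ℝ) (v : V) (t : ℝ) : Prop :=
  ∃ s : ℕ, (∃ x, G.Adj v x ∧ (2 * (s : ℝ) + 1) * κ ≤ L x t - L v t) ∧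
    ∀ y, G.Adj v y → L v t - L y t ≤ (2 * (s : ℝ) + 1) * κ

/-- Node `v` satisfies the *slow condition* at time `t`. -/
def slowCond (G : SimpleGraph V) (L : V → ℝ → ℝ) (κ : ℝ) (v : V) (t : ℝ) : Prop :=
  ∃ s : ℕ, (∃ x, G.Adj v x ∧ 2 * (s : ℝ) * κ ≤ L v t - L x t) ∧
    ∀ y, G.Adj v y → L y t - L v t ≤ 2 * (s : ℝ) * κ

/-- `Ψ_v^s(t) = max_{w ∈ V} (L_w(t) - L_v(t) - 2sκ·d(v,w))`. -/
noncomputable def Psi [Fintype V] [Nonempty V] (G : SimpleGraph V) (L : V → ℝ → ℝ)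
    (κ : ℝ) (s : ℕ) (v : V) (t : ℝ) : ℝ :=
  univ.sup' univ_nonempty fun w => L w t - L v t - 2 * (s : ℝ) * κ * (G.dist v w)

/-- `Ψ^s(t) = max_{v ∈ V} Ψ_v^s(t)`. -/
noncomputable def PsiMax [Fintype V] [Nonempty V] (G : SimpleGraph V) (L : V → ℝ → ℝ)
    (κ : ℝ) (s : ℕ) (t : ℝ) : ℝ :=
  univ.sup' univ_nonempty fun v => Psi G L κ s v t

/-- `Ξ_v^s(t) = max_{w ∈ V} (L_v(t) - L_w(t) - (2s+1)κ·d(v,w))`. -/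
noncomputable def Xi [Fintype V] [Nonempty V] (G : SimpleGraph V) (L : V → ℝ → ℝ)
    (κ : ℝ) (s : ℕ) (v : V) (t : ℝ) : ℝ :=
  univ.sup' univ_nonempty fun w => L v t - L w t - (2 * (s : ℝ) + 1) * κ * (G.dist v w)

/-- The global skew `𝒢(t) = max_{v,w ∈ V} |L_v(t) - L_w(t)|`. -/
noncomputable def GSkew [Fintype V] [Nonempty V] (L : V → ℝ → ℝ) (t : ℝ) : ℝ :=
  univ.sup' univ_nonempty fun p : V × V => |L p.1 t - L p.2 t|


/-!
Write `c = ρ/μ` and suppose `Ψ^j ≤ ψ` from time `t₀` on. For a node `v` and `0 ≤ c' ≤ 1` the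
potential `Ψ_v^{j+1} + c'·Ξ_v^j` is at most `Ψ^j`. While `Ψ_v^{j+1} > 0` every node realizing
`Ψ_v^{j+1}` is slow, and while `Ξ_v^j > 0` (or `v` itself is fast) every node realizing `Ξ_v^j` is
fast; so the potential has upper right Dini derivative at most `ρ - c'μ`: for `c' = c` it does not
increase, for `c' = 1` it decreases at rate `μ - ρ`. At a time of maximal violation, going back to
the last time where this fails for the maximizing node (`Ψ_v^{j+1} = 0`, or `Ξ_v^j = 0` with `v` at
least `κ` below `Ψ^{j+1}`) yields `Ψ^{j+1}(t) ≤ max (cψ) (ψ - (μ - ρ)(t - t₀))`, hence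
`Ψ^{j+1} ≤ cψ` after `t₀ + ψ/μ`. Iterating, the waiting times `cⁱψ/μ` sum to less than `ψ/(μ - ρ)`.
-/

open Filter Topology

section RightSlope

/-- The upper right Dini derivative of `f` at `x` is at most `r`. -/
def RightSlopeLE (f : ℝ → ℝ) (x r : ℝ) : Prop :=
  ∀ r' > r, ∀ᶠ z in 𝓝[>] x, slope f x z < r'

variable {f g : ℝ → ℝ} {x r : ℝ}

lemma slope_lt_iff_of_lt {z : ℝ} (hxz : x < z) : slope f x z < r ↔ f z < f x + r * (z - x) := by
  rw [slope_def_field, div_lt_iff₀ (sub_pos.2 hxz)]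
  constructor <;> intro h <;> linarith

lemma HasDerivAt.rightSlopeLE {f' : ℝ} (hf : HasDerivAt f f' x) : RightSlopeLE f x f' :=
  fun _ hr => hf.hasDerivWithinAt.limsup_slope_le' (lt_irrefl x) hr

lemma RightSlopeLE.mono {s : ℝ} (hf : RightSlopeLE f x r) (hrs : r ≤ s) : RightSlopeLE f x s :=
  fun r' hr' => hf r' (hrs.trans_lt hr')

lemma RightSlopeLE.add_const_mul {a b c : ℝ} (hf : RightSlopeLE f x a) (hg : RightSlopeLE g x b)
    (hc : 0 ≤ c) : RightSlopeLE (fun t => f t + c * g t) x (a + c * b) := by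
  intro r' hr'
  set ε := (r' - (a + c * b)) / (1 + c)
  have hε : 0 < ε := div_pos (by linarith) (by linarith)
  have hεc : (1 + c) * ε = r' - (a + c * b) := mul_div_cancel₀ _ (by linarith)
  filter_upwards [hf (a + ε) (by linarith), hg (b + ε) (by linarith)] with z hfz hgz
  have hsum : slope (fun t => f t + c * g t) x z = slope f x z + c * slope g x z := by
    simp only [slope_def_field]
    ring
  rw [hsum]
  nlinarith [mul_le_mul_of_nonneg_left hgz.le hc]

lemma rightSlopeLE_finset_sup' {ι : Type*} {s : Finset ι} (hs : s.Nonempty) {f : ι → ℝ → ℝ}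
    (hcont : ∀ i ∈ s, ContinuousAt (f i) x)
    (hmax : ∀ i ∈ s, f i x = s.sup' hs (f · x) → RightSlopeLE (f i) x r) :
    RightSlopeLE (fun t => s.sup' hs (f · t)) x r := by
  intro r' hr'
  set M := s.sup' hs (f · x)
  have key : ∀ i ∈ s, ∀ᶠ z in 𝓝[>] x, f i z < M + r' * (z - x) := by
    intro i hi
    rcases (le_sup' (f · x) hi).eq_or_lt with heq | hlt
    · filter_upwards [hmax i hi heq r' hr', self_mem_nhdsWithin] with z hz hxz
      rwa [slope_lt_iff_of_lt hxz, heq] at hz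
    · have hlim : Tendsto (fun z => f i z - r' * (z - x)) (𝓝[>] x) (𝓝 (f i x)) := by
        have : ContinuousAt (fun z => f i z - r' * (z - x)) x := (hcont i hi).sub (by fun_prop)
        simpa using this.tendsto.mono_left nhdsWithin_le_nhds
      filter_upwards [hlim.eventually_lt_const hlt] with z hz
      linarith
  filter_upwards [(eventually_all_finset s).2 key, self_mem_nhdsWithin] with z hz hxz
  rw [slope_lt_iff_of_lt hxz]
  exact (sup'_lt_iff hs).2 hz

lemma le_add_mul_sub_of_rightSlopeLE {a b : ℝ} (hab : a ≤ b) (hf : ContinuousOn f (Set.Icc a b))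
    (h : ∀ x ∈ Set.Ioo a b, RightSlopeLE f x r) : f b ≤ f a + r * (b - a) := by
  rcases hab.eq_or_lt with rfl | hab
  · simp
  have hlater : ∀ a' ∈ Set.Ioo a b, f b ≤ f a' + r * (b - a') := fun a' ha' =>
    image_le_of_liminf_slope_right_le_deriv_boundary
      (hf.mono (Set.Icc_subset_Icc ha'.1.le le_rfl)) (B := fun t => f a' + r * (t - a'))
      (B' := fun _ => r) (by simp) (by fun_prop)
      (fun x _ => by
        simpa using (((hasDerivWithinAt_id x _).sub_const a').const_mul r).const_add (f a'))
      (fun x hx r' hr' => (h x ⟨ha'.1.trans_le hx.1, hx.2⟩ r' hr').frequently)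
      ⟨ha'.2.le, le_rfl⟩
  have hlim : Tendsto (fun a' => f a' + r * (b - a')) (𝓝[>] a) (𝓝 (f a + r * (b - a))) :=
    (((hf a ⟨le_rfl, hab.le⟩).mono_of_mem_nhdsWithin (Icc_mem_nhdsGT hab)).add
      (by fun_prop : Continuous fun a' => r * (b - a')).continuousWithinAt).tendsto
  exact ge_of_tendsto hlim (by filter_upwards [Ioo_mem_nhdsGT hab] using hlater)

end RightSlope

namespace SimpleGraph

variable {G : SimpleGraph V} {v w y : V}

lemma Connected.exists_adj_dist_add_one_eq (hconn : G.Connected) (h : v ≠ w) :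
    ∃ u, G.Adj v u ∧ G.dist u w + 1 = G.dist v w := by
  obtain ⟨p, hp⟩ := hconn.exists_walk_length_eq_dist v w
  have hnil : ¬ p.Nil := Walk.not_nil_of_ne h
  have hadj := p.adj_snd hnil
  refine ⟨p.snd, hadj, le_antisymm ?_ ?_⟩
  · rw [← hp, ← p.length_tail_add_one hnil]
    exact Nat.add_le_add_right (dist_le p.tail) 1
  · have := hconn.dist_triangle (u := v) (v := p.snd) (w := w)
    rw [dist_eq_one_iff_adj.2 hadj] at this
    omega

lemma Connected.exists_adj_le_sub_of_forall_le (hconn : G.Connected) {F : V → ℝ} {a : ℝ}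
    (hw : w ≠ v) (hmax : ∀ u, F u - a * G.dist v u ≤ F w - a * G.dist v w) :
    ∃ x, G.Adj w x ∧ a ≤ F w - F x := by
  obtain ⟨x, hadj, hx⟩ := hconn.exists_adj_dist_add_one_eq hw
  refine ⟨x, hadj, ?_⟩
  have hd : (G.dist v w : ℝ) = G.dist v x + 1 := by
    rw [dist_comm, dist_comm (u := v)]
    exact_mod_cast hx.symm
  linarith [hd ▸ hmax x]

lemma sub_le_of_adj_of_forall_le {F : V → ℝ} {a : ℝ} (ha : 0 ≤ a)
    (hmax : ∀ u, F u - a * G.dist v u ≤ F w - a * G.dist v w) (hy : G.Adj w y) :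
    F y - F w ≤ a := by
  have hd : (G.dist v y : ℝ) ≤ G.dist v w + 1 := by
    have := hy.reachable.dist_triangle_right v
    rw [dist_eq_one_iff_adj.2 hy] at this
    exact_mod_cast this
  nlinarith [hmax y, mul_le_mul_of_nonneg_left hd ha]

end SimpleGraph

open SimpleGraph

section Skew

variable [Fintype V] [Nonempty V] {G : SimpleGraph V} {L : V → ℝ → ℝ} {κ : ℝ} {j : ℕ}
  {v : V} {t : ℝ}

lemma le_Psi (w : V) : L w t - L v t - 2 * (j : ℝ) * κ * G.dist v w ≤ Psi G L κ j v t :=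
  le_sup' (fun w => L w t - L v t - 2 * (j : ℝ) * κ * G.dist v w) (mem_univ w)

lemma exists_Psi_eq : ∃ w, Psi G L κ j v t = L w t - L v t - 2 * (j : ℝ) * κ * G.dist v w := by
  obtain ⟨w, -, hw⟩ := exists_mem_eq_sup' univ_nonempty
    fun w => L w t - L v t - 2 * (j : ℝ) * κ * G.dist v w
  exact ⟨w, hw⟩

lemma Psi_nonneg : 0 ≤ Psi G L κ j v t := by
  simpa using le_Psi (G := G) (L := L) (κ := κ) (j := j) (v := v) (t := t) v

lemma Psi_le_PsiMax : Psi G L κ j v t ≤ PsiMax G L κ j t :=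
  le_sup' (fun v => Psi G L κ j v t) (mem_univ v)

lemma PsiMax_nonneg : 0 ≤ PsiMax G L κ j t :=
  Psi_nonneg.trans (Psi_le_PsiMax (v := Classical.arbitrary V))

lemma le_Xi (w : V) : L v t - L w t - (2 * (j : ℝ) + 1) * κ * G.dist v w ≤ Xi G L κ j v t :=
  le_sup' (fun w => L v t - L w t - (2 * (j : ℝ) + 1) * κ * G.dist v w) (mem_univ w)

lemma exists_Xi_eq :
    ∃ w, Xi G L κ j v t = L v t - L w t - (2 * (j : ℝ) + 1) * κ * G.dist v w := by
  obtain ⟨w, -, hw⟩ := exists_mem_eq_sup' univ_nonempty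
    fun w => L v t - L w t - (2 * (j : ℝ) + 1) * κ * G.dist v w
  exact ⟨w, hw⟩

lemma Xi_nonneg : 0 ≤ Xi G L κ j v t := by
  simpa using le_Xi (G := G) (L := L) (κ := κ) (j := j) (v := v) (t := t) v

lemma Psi_succ_add_Xi_le_PsiMax (hconn : G.Connected) (hκ : 0 ≤ κ) :
    Psi G L κ (j + 1) v t + Xi G L κ j v t ≤ PsiMax G L κ j t := by
  obtain ⟨w₁, h₁⟩ := exists_Psi_eq (G := G) (L := L) (κ := κ) (j := j + 1) (v := v) (t := t)
  obtain ⟨w₂, h₂⟩ := exists_Xi_eq (G := G) (L := L) (κ := κ) (j := j) (v := v) (t := t)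
  have htri : (G.dist w₂ w₁ : ℝ) ≤ G.dist v w₂ + G.dist v w₁ := by
    have := hconn.dist_triangle (u := w₂) (v := v) (w := w₁)
    rw [dist_comm (u := w₂) (v := v)] at this
    exact_mod_cast this
  have h₃ := (le_Psi (j := j) (v := w₂) w₁).trans (Psi_le_PsiMax (G := G) (L := L) (κ := κ) (t := t))
  rw [h₁, h₂]
  push_cast
  nlinarith [mul_le_mul_of_nonneg_left htri (by positivity : 0 ≤ 2 * (j : ℝ) * κ),
    mul_nonneg hκ (Nat.cast_nonneg (α := ℝ) (G.dist v w₁)),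
    mul_nonneg hκ (Nat.cast_nonneg (α := ℝ) (G.dist v w₂))]

lemma slowCond_of_Psi_eq (hconn : G.Connected) (hκ : 0 ≤ κ) {w : V} (hw : w ≠ v)
    (h : Psi G L κ j v t = L w t - L v t - 2 * (j : ℝ) * κ * G.dist v w) :
    slowCond G L κ w t := by
  have hmax (u : V) : L u t - 2 * (j : ℝ) * κ * G.dist v u ≤ L w t - 2 * (j : ℝ) * κ * G.dist v w := by
    linarith [le_Psi (G := G) (L := L) (κ := κ) (j := j) (v := v) (t := t) u]
  exact ⟨j, hconn.exists_adj_le_sub_of_forall_le hw hmax,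
    fun y hy => sub_le_of_adj_of_forall_le (by positivity) hmax hy⟩

lemma fastCond_of_Xi_eq (hconn : G.Connected) (hκ : 0 ≤ κ) {w : V} (hw : w ≠ v)
    (h : Xi G L κ j v t = L v t - L w t - (2 * (j : ℝ) + 1) * κ * G.dist v w) :
    fastCond G L κ w t := by
  have hmax (u : V) : -L u t - (2 * (j : ℝ) + 1) * κ * G.dist v u ≤
      -L w t - (2 * (j : ℝ) + 1) * κ * G.dist v w := by
    linarith [le_Xi (G := G) (L := L) (κ := κ) (j := j) (v := v) (t := t) u]
  obtain ⟨x, hx, hle⟩ := hconn.exists_adj_le_sub_of_forall_le hw hmax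
  refine ⟨j, ⟨x, hx, by linarith⟩, fun y hy => ?_⟩
  linarith [sub_le_of_adj_of_forall_le (by positivity) hmax hy]

lemma fastCond_or_Psi_add_le_PsiMax (hconn : G.Connected) (hXi : Xi G L κ j v t = 0)
    (hΨ : 0 < Psi G L κ (j + 1) v t) :
    fastCond G L κ v t ∨ Psi G L κ (j + 1) v t + κ ≤ PsiMax G L κ (j + 1) t := by
  by_cases hex : ∃ x, G.Adj v x ∧ (2 * (j : ℝ) + 1) * κ ≤ L x t - L v t
  · refine Or.inl ⟨j, hex, fun y hy => ?_⟩
    have := le_Xi (G := G) (L := L) (κ := κ) (j := j) (v := v) (t := t) y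
    rw [hXi, dist_eq_one_iff_adj.2 hy] at this
    push_cast at this
    linarith
  push Not at hex
  obtain ⟨w, hw⟩ := exists_Psi_eq (G := G) (L := L) (κ := κ) (j := j + 1) (v := v) (t := t)
  have hvw : v ≠ w := by
    rintro rfl
    simp only [sub_self, dist_self, CharP.cast_eq_zero, mul_zero] at hw
    linarith
  obtain ⟨u, hadj, hu⟩ := hconn.exists_adj_dist_add_one_eq hvw
  have hd : (G.dist v w : ℝ) = G.dist u w + 1 := by exact_mod_cast hu.symm
  have := (le_Psi (v := u) w).trans (Psi_le_PsiMax (G := G) (L := L) (κ := κ) (j := j + 1) (t := t))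
  right
  rw [hw, hd]
  push_cast at this ⊢
  linear_combination this + (hex u hadj).le

end Skew

lemma hasDerivAt_sub_sub_const {L : V → ℝ → ℝ} {t : ℝ} (hL : ∀ v, Differentiable ℝ (L v))
    (v w : V) (C : ℝ) :
    HasDerivAt (fun s => L w s - L v s - C) (deriv (L w) t - deriv (L v) t) t :=
  ((hL w t).hasDerivAt.sub (hL v t).hasDerivAt).sub_const C

section Dynamics

variable [Fintype V] [Nonempty V] {G : SimpleGraph V} {L : V → ℝ → ℝ} {κ ρ μ : ℝ} {j : ℕ}
  {v : V} {t : ℝ}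

lemma continuous_Psi (hL : ∀ v, Continuous (L v)) : Continuous (Psi G L κ j v) :=
  Continuous.finset_sup'_apply _ fun w _ => ((hL w).sub (hL v)).sub continuous_const

lemma continuous_Xi (hL : ∀ v, Continuous (L v)) : Continuous (Xi G L κ j v) :=
  Continuous.finset_sup'_apply _ fun w _ => ((hL v).sub (hL w)).sub continuous_const

lemma continuous_PsiMax (hL : ∀ v, Continuous (L v)) : Continuous (PsiMax G L κ j) :=
  Continuous.finset_sup'_apply _ fun _ _ => continuous_Psi hL

lemma rightSlopeLE_Psi (hconn : G.Connected) (hκ : 0 ≤ κ) (hL : ∀ v, Differentiable ℝ (L v))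
    (hslow : ∀ v u, 0 ≤ u → slowCond G L κ v u → deriv (L v) u ≤ 1 + ρ)
    (ht : 0 ≤ t) (hΨ : 0 < Psi G L κ j v t) :
    RightSlopeLE (Psi G L κ j v) t (1 + ρ - deriv (L v) t) := by
  refine rightSlopeLE_finset_sup' univ_nonempty
    (fun w _ => (hasDerivAt_sub_sub_const hL v w _).continuousAt) fun w _ hw => ?_
  have hwv : w ≠ v := by
    rintro rfl
    have : Psi G L κ j w t = 0 := hw.symm.trans (by simp)
    linarith
  refine (hasDerivAt_sub_sub_const hL v w _).rightSlopeLE.mono ?_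
  linarith [hslow w t ht (slowCond_of_Psi_eq hconn hκ hwv hw.symm)]

lemma rightSlopeLE_Xi (hconn : G.Connected) (hκ : 0 ≤ κ) (hL : ∀ v, Differentiable ℝ (L v))
    (hfast : ∀ v u, 0 ≤ u → fastCond G L κ v u → 1 + μ ≤ deriv (L v) u)
    (ht : 0 ≤ t) (h : 0 < Xi G L κ j v t ∨ fastCond G L κ v t) :
    RightSlopeLE (Xi G L κ j v) t (deriv (L v) t - (1 + μ)) := by
  refine rightSlopeLE_finset_sup' univ_nonempty
    (fun w _ => (hasDerivAt_sub_sub_const hL w v _).continuousAt) fun w _ hw => ?_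
  refine (hasDerivAt_sub_sub_const hL w v _).rightSlopeLE.mono ?_
  by_cases hwv : w = v
  · subst hwv
    have hXi : Xi G L κ j w t = 0 := hw.symm.trans (by simp)
    linarith [hfast w t ht (h.resolve_left hXi.not_gt)]
  · linarith [hfast w t ht (fastCond_of_Xi_eq hconn hκ hwv hw.symm)]

structure GCSInvariants (G : SimpleGraph V) (L : V → ℝ → ℝ) (κ ρ μ : ℝ) : Prop where
  differentiable : ∀ v, Differentiable ℝ (L v)
  one_le_deriv : ∀ v u, 0 ≤ u → 1 ≤ deriv (L v) u
  deriv_ge_of_fastCond : ∀ v u, 0 ≤ u → fastCond G L κ v u → 1 + μ ≤ deriv (L v) u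
  deriv_le_of_slowCond : ∀ v u, 0 ≤ u → slowCond G L κ v u → deriv (L v) u ≤ 1 + ρ

variable (G L κ) in
noncomputable def potential (c : ℝ) (j : ℕ) (v : V) (t : ℝ) : ℝ :=
  Psi G L κ (j + 1) v t + c * Xi G L κ j v t

lemma potential_mono {c c' : ℝ} (hcc' : c ≤ c') :
    potential G L κ c j v t ≤ potential G L κ c' j v t := by
  unfold potential
  gcongr
  exact Xi_nonneg

lemma Psi_le_potential {c : ℝ} (hc : 0 ≤ c) : Psi G L κ (j + 1) v t ≤ potential G L κ c j v t :=
  le_add_of_nonneg_right (mul_nonneg hc Xi_nonneg)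

lemma potential_one_le_PsiMax (hconn : G.Connected) (hκ : 0 ≤ κ) :
    potential G L κ 1 j v t ≤ PsiMax G L κ j t := by
  simpa [potential] using Psi_succ_add_Xi_le_PsiMax hconn hκ

lemma continuous_potential (hL : ∀ v, Continuous (L v)) (c : ℝ) :
    Continuous (potential G L κ c j v) :=
  (continuous_Psi hL).add (continuous_const.mul (continuous_Xi hL))

lemma rightSlopeLE_potential (hG : GCSInvariants G L κ ρ μ) (hconn : G.Connected) (hκ : 0 ≤ κ)
    {c : ℝ} (hc₀ : 0 ≤ c) (hc₁ : c ≤ 1) (ht : 0 ≤ t) (hΨ : 0 < Psi G L κ (j + 1) v t)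
    (hgood : 0 < Xi G L κ j v t ∨ fastCond G L κ v t) :
    RightSlopeLE (potential G L κ c j v) t (ρ - c * μ) :=
  ((rightSlopeLE_Psi hconn hκ hG.differentiable hG.deriv_le_of_slowCond ht hΨ).add_const_mul
    (rightSlopeLE_Xi hconn hκ hG.differentiable hG.deriv_ge_of_fastCond ht hgood) hc₀).mono
    (by nlinarith [hG.one_le_deriv v t ht])

lemma potential_le_of_forall_mem_Ioo (hG : GCSInvariants G L κ ρ μ) (hconn : G.Connected)
    (hκ : 0 ≤ κ) {c : ℝ} (hc₀ : 0 ≤ c) (hc₁ : c ≤ 1) {σ τ : ℝ} (hσ : 0 ≤ σ) (hστ : σ ≤ τ)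
    (hgood : ∀ x ∈ Set.Ioo σ τ,
      0 < Psi G L κ (j + 1) v x ∧ (0 < Xi G L κ j v x ∨ fastCond G L κ v x)) :
    potential G L κ c j v τ ≤ potential G L κ c j v σ + (ρ - c * μ) * (τ - σ) :=
  le_add_mul_sub_of_rightSlopeLE hστ
    (continuous_potential (fun v => (hG.differentiable v).continuous) c).continuousOn
    fun x hx => rightSlopeLE_potential hG hconn hκ hc₀ hc₁ (hσ.trans hx.1.le) (hgood x hx).1
      (hgood x hx).2

end Dynamics

section Step

variable [Fintype V] [Nonempty V] {G : SimpleGraph V} {L : V → ℝ → ℝ} {κ ρ μ : ℝ} {j : ℕ}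
  {v : V}

lemma exists_last_bad_time (hconn : G.Connected) (hL : ∀ v, Continuous (L v)) {t₀ τ : ℝ}
    (hτ : t₀ ≤ τ) :
    ∃ σ ∈ Set.Icc t₀ τ, (σ = t₀ ∨ Psi G L κ (j + 1) v σ = 0 ∨
        Xi G L κ j v σ = 0 ∧ Psi G L κ (j + 1) v σ + κ ≤ PsiMax G L κ (j + 1) σ) ∧
      ∀ x ∈ Set.Ioo σ τ,
        0 < Psi G L κ (j + 1) v x ∧ (0 < Xi G L κ j v x ∨ fastCond G L κ v x) := by
  set S := {σ | σ = t₀ ∨ Psi G L κ (j + 1) v σ = 0 ∨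
    Xi G L κ j v σ = 0 ∧ Psi G L κ (j + 1) v σ + κ ≤ PsiMax G L κ (j + 1) σ}
  have hS : IsClosed S :=
    isClosed_singleton.union ((isClosed_eq (continuous_Psi hL) continuous_const).union
      ((isClosed_eq (continuous_Xi hL) continuous_const).inter
        (isClosed_le ((continuous_Psi hL).add continuous_const) (continuous_PsiMax hL))))
  obtain ⟨σ, ⟨hσS, hσ⟩, hlast⟩ :=
    (isCompact_Icc.inter_left hS).exists_isGreatest ⟨t₀, Or.inl rfl, le_rfl, hτ⟩
  refine ⟨σ, hσ, hσS, fun x hx => ?_⟩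
  have hxS : ¬(x = t₀ ∨ Psi G L κ (j + 1) v x = 0 ∨
      Xi G L κ j v x = 0 ∧ Psi G L κ (j + 1) v x + κ ≤ PsiMax G L κ (j + 1) x) :=
    fun hxS => hx.1.not_ge (hlast ⟨hxS, hσ.1.trans hx.1.le, hx.2.le⟩)
  simp only [not_or, not_and] at hxS
  obtain ⟨-, hΨ, hcap⟩ := hxS
  have hΨ' : 0 < Psi G L κ (j + 1) v x := lt_of_le_of_ne Psi_nonneg (Ne.symm hΨ)
  refine ⟨hΨ', ?_⟩
  rcases (Xi_nonneg (G := G) (L := L) (κ := κ) (j := j) (v := v) (t := x)).lt_or_eq with hXi | hXi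
  · exact Or.inl hXi
  · exact Or.inr ((fastCond_or_Psi_add_le_PsiMax hconn hXi.symm hΨ').resolve_right (hcap hXi.symm))

lemma potential_lt_of_PsiMax_le (hG : GCSInvariants G L κ ρ μ) (hconn : G.Connected)
    (hκ : 0 < κ) (hρ : 0 ≤ ρ) (hρμ : ρ < μ) {t₀ τ ψ M : ℝ} (ht₀ : 0 ≤ t₀) (hτ : t₀ ≤ τ)
    (hbound : ∀ t, t₀ ≤ t → PsiMax G L κ j t ≤ ψ) (hM : 0 < M)
    (hY : ∀ σ ∈ Set.Icc t₀ τ,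
      PsiMax G L κ (j + 1) σ ≤ max (ρ / μ * ψ) (ψ - (μ - ρ) * (σ - t₀)) + M) :
    potential G L κ (ρ / μ) j v τ < max (ρ / μ * ψ) (ψ - (μ - ρ) * (τ - t₀)) + M := by
  have hμ : 0 < μ := hρ.trans_lt hρμ
  have hc₀ : 0 ≤ ρ / μ := div_nonneg hρ hμ.le
  have hc₁ : ρ / μ ≤ 1 := (div_le_one hμ).2 hρμ.le
  obtain ⟨σ, hσ, hanchor, hgood⟩ := exists_last_bad_time (κ := κ) (j := j) (v := v) hconn
    (fun v => (hG.differentiable v).continuous) hτ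
  have hdecay {c : ℝ} (hc₀ : 0 ≤ c) (hc₁ : c ≤ 1) :=
    potential_le_of_forall_mem_Ioo hG hconn hκ.le hc₀ hc₁ (ht₀.trans hσ.1) hσ.2 hgood
  have hKA : potential G L κ (ρ / μ) j v τ ≤ potential G L κ 1 j v τ := potential_mono hc₁
  have hAσ : potential G L κ 1 j v σ ≤ ψ :=
    (potential_one_le_PsiMax hconn hκ.le).trans (hbound σ hσ.1)
  have hΦ₁ := le_max_left (ρ / μ * ψ) (ψ - (μ - ρ) * (τ - t₀))
  have hΦ₂ := le_max_right (ρ / μ * ψ) (ψ - (μ - ρ) * (τ - t₀))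
  rcases hanchor with rfl | hΨ | ⟨hXi, hcap⟩
  · linarith [hdecay zero_le_one le_rfl]
  · have hKσ : potential G L κ (ρ / μ) j v σ = ρ / μ * potential G L κ 1 j v σ := by
      simp [potential, hΨ]
    have := hdecay hc₀ hc₁
    rw [div_mul_cancel₀ ρ hμ.ne', sub_self, zero_mul, add_zero, hKσ] at this
    nlinarith [mul_le_mul_of_nonneg_left hAσ hc₀]
  · have hAσ' : potential G L κ 1 j v σ = Psi G L κ (j + 1) v σ := by simp [potential, hXi]
    have hΦσ : max (ρ / μ * ψ) (ψ - (μ - ρ) * (σ - t₀)) ≤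
        max (ρ / μ * ψ) (ψ - (μ - ρ) * (τ - t₀)) + (μ - ρ) * (τ - σ) :=
      max_le (by nlinarith [hσ.2]) (by nlinarith)
    nlinarith [hdecay zero_le_one le_rfl, hY σ hσ]

theorem PsiMax_succ_le (hG : GCSInvariants G L κ ρ μ) (hconn : G.Connected) (hκ : 0 < κ)
    (hρ : 0 ≤ ρ) (hρμ : ρ < μ) {t₀ ψ : ℝ} (ht₀ : 0 ≤ t₀)
    (hbound : ∀ t, t₀ ≤ t → PsiMax G L κ j t ≤ ψ) {t : ℝ} (ht : t₀ ≤ t) :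
    PsiMax G L κ (j + 1) t ≤ max (ρ / μ * ψ) (ψ - (μ - ρ) * (t - t₀)) := by
  have hc₀ : 0 ≤ ρ / μ := div_nonneg hρ (hρ.trans hρμ.le)
  set Φ : ℝ → ℝ := fun t => max (ρ / μ * ψ) (ψ - (μ - ρ) * (t - t₀))
  set Y : ℝ → ℝ := fun t => univ.sup' univ_nonempty fun v => potential G L κ (ρ / μ) j v t
  have hPsiY (t : ℝ) : PsiMax G L κ (j + 1) t ≤ Y t := sup'_le _ _ fun v _ =>
    (Psi_le_potential hc₀).trans (le_sup' (fun v => potential G L κ (ρ / μ) j v t) (mem_univ v))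
  refine (hPsiY t).trans (le_of_not_gt fun hlt => ?_)
  have hcont : Continuous fun t => Y t - Φ t :=
    (Continuous.finset_sup'_apply _ fun v _ =>
      continuous_potential (fun v => (hG.differentiable v).continuous) _).sub (by fun_prop)
  -- `τ` is a time of maximal violation on `[t₀, t]`
  obtain ⟨τ, hτ, hmax⟩ := isCompact_Icc.exists_isMaxOn (Set.nonempty_Icc.2 ht) hcont.continuousOn
  obtain ⟨v, -, hv⟩ := exists_mem_eq_sup' univ_nonempty
    fun v => potential G L κ (ρ / μ) j v τ
  have hM : 0 < Y τ - Φ τ := (sub_pos.2 hlt).trans_le (hmax ⟨ht, le_rfl⟩)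
  have := potential_lt_of_PsiMax_le (v := v) hG hconn hκ hρ hρμ ht₀ hτ.1 hbound hM fun σ hσ =>
    (hPsiY σ).trans (by linarith [show Y σ - Φ σ ≤ Y τ - Φ τ from hmax ⟨hσ.1, hσ.2.trans hτ.2⟩])
  linarith [show Y τ = potential G L κ (ρ / μ) j v τ from hv]

theorem PsiMax_succ_le_of_le (hG : GCSInvariants G L κ ρ μ) (hconn : G.Connected) (hκ : 0 < κ)
    (hρ : 0 ≤ ρ) (hρμ : ρ < μ) {t₀ ψ : ℝ} (ht₀ : 0 ≤ t₀)
    (hbound : ∀ t, t₀ ≤ t → PsiMax G L κ j t ≤ ψ) {t : ℝ} (ht : t₀ + ψ / μ ≤ t) :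
    PsiMax G L κ (j + 1) t ≤ ρ / μ * ψ := by
  have hμ : 0 < μ := hρ.trans_lt hρμ
  have hψ : 0 ≤ ψ := PsiMax_nonneg.trans (hbound t₀ le_rfl)
  have hψμ : 0 ≤ ψ / μ := div_nonneg hψ hμ.le
  refine (PsiMax_succ_le hG hconn hκ hρ hρμ ht₀ hbound (by linarith)).trans (max_le le_rfl ?_)
  have : ψ - ρ / μ * ψ = (μ - ρ) * (ψ / μ) := by field_simp
  nlinarith [mul_le_mul_of_nonneg_left (show ψ / μ ≤ t - t₀ by linarith) (sub_nonneg.2 hρμ.le)]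

end Step

/-- geometric decay of `Ψ^{s'}` for `s' ≥ s`, after time `ψ/(μ-ρ)`. -/
theorem stmt_15 [Fintype V] [Nonempty V] (G : SimpleGraph V) (hconn : G.Connected)
    (L : V → ℝ → ℝ) (κ ρ μ : ℝ) (hκ : 0 < κ) (hρ : 0 < ρ) (hρμ : ρ < μ)
    (hdiff : ∀ v, Differentiable ℝ (L v))
    (hrate : ∀ v u, 0 ≤ u → 1 ≤ deriv (L v) u ∧ deriv (L v) u ≤ (1 + μ) * (1 + ρ))
    (hfastI : ∀ v u, 0 ≤ u → fastCond G L κ v u → 1 + μ ≤ deriv (L v) u)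
    (hslowI : ∀ v u, 0 ≤ u → slowCond G L κ v u → deriv (L v) u ≤ 1 + ρ)
    (s : ℕ) (ψ : ℝ) (hψ : ∀ t, 0 ≤ t → PsiMax G L κ s t ≤ ψ) :
    ∀ s' : ℕ, s ≤ s' → ∀ t, ψ / (μ - ρ) ≤ t → PsiMax G L κ s' t ≤ (ρ / μ) ^ (s' - s) * ψ := by
  have hG : GCSInvariants G L κ ρ μ := ⟨hdiff, fun v u hu => (hrate v u hu).1, hfastI, hslowI⟩
  have hμ : 0 < μ := hρ.trans hρμ
  have hμρ : 0 < μ - ρ := sub_pos.2 hρμ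
  have hc₀ : 0 ≤ ρ / μ := div_nonneg hρ.le hμ.le
  have hψ₀ : 0 ≤ ψ := PsiMax_nonneg.trans (hψ 0 le_rfl)
  -- after `(1 - (ρ/μ)^k) ψ / (μ - ρ)`, the sum of the first `k` waiting times `(ρ/μ)^i ψ / μ`
  have key (k : ℕ) : ∀ t, (1 - (ρ / μ) ^ k) * ψ / (μ - ρ) ≤ t →
      PsiMax G L κ (s + k) t ≤ (ρ / μ) ^ k * ψ := by
    induction k with
    | zero => simpa using hψ
    | succ k ih =>
      intro t ht
      have hT : (1 - (ρ / μ) ^ (k + 1)) * ψ / (μ - ρ) =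
          (1 - (ρ / μ) ^ k) * ψ / (μ - ρ) + (ρ / μ) ^ k * ψ / μ := by
        have hinv : (1 - ρ / μ) / (μ - ρ) = 1 / μ := by field_simp
        rw [show (ρ / μ) ^ k * ψ / μ = (ρ / μ) ^ k * ψ * ((1 - ρ / μ) / (μ - ρ)) by
          rw [hinv]; ring]
        ring
      have hT₀ : 0 ≤ (1 - (ρ / μ) ^ k) * ψ / (μ - ρ) :=
        div_nonneg (mul_nonneg (sub_nonneg.2 (pow_le_one₀ hc₀ ((div_le_one hμ).2 hρμ.le))) hψ₀)
          hμρ.le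
      rw [pow_succ', mul_assoc]
      exact PsiMax_succ_le_of_le hG hconn hκ hρ.le hρμ hT₀ ih (hT ▸ ht)
  intro s' hs' t ht
  obtain ⟨k, rfl⟩ := Nat.exists_eq_add_of_le hs'
  rw [Nat.add_sub_cancel_left]
  refine key k t (le_trans ?_ ht)
  gcongr
  nlinarith [mul_nonneg (pow_nonneg hc₀ k) hψ₀]
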